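/- Let G be a finite bipartite graph. Then the set 𝔐(G) of vertices that are covered by every maximum matching of G is a vertex cover of G, i.e., every edge of G has at least one endpoint that is covered by every maximum matching of G. -/

import Mathlib

/-- A digraph (given by its arc relation) is semi-complete if it is simple (no loops;
multiple arcs are impossible in this encoding) and any two distinct vertices are
joined by an arc in at least one direction. -/
def SemiComplete {V : Type*} (E : V → V → Prop) : Prop :=
  (∀ v, ¬ E v v) ∧ ∀ v w : V, v ≠ w → E v w ∨ E w v

/-- The outdegree of a vertex: the number of its outneighbours. -/
noncomputable def outdeg {V : Type*} (E : V → V → Prop) (v : V) : ℕ :=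
  {w | E v w}.ncard

/-- A directed path, encoded as a nonempty list of pairwise distinct vertices in which
consecutive vertices are joined by arcs. -/
def IsDipath {V : Type*} (E : V → V → Prop) (p : List V) : Prop :=
  p ≠ [] ∧ p.Nodup ∧ p.Chain' E

/-- A directed path from `v` to `w`. -/
def PathFrom {V : Type*} (E : V → V → Prop) (v w : V) (p : List V) : Prop :=
  IsDipath E p ∧ p.head? = some v ∧ p.getLast? = some w

/-- The length of a path (its number of arcs). -/
def pathLen {V : Type*} (p : List V) : ℕ := p.length - 1

/-- The internal vertices of a path: all vertices except the first and the last one. -/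
def internals {V : Type*} (p : List V) : List V := (p.drop 1).dropLast

/-- The arcs of a path. -/
def arcsOf {V : Type*} (p : List V) : List (V × V) := p.zip (p.drop 1)

/-- A `(k,d)`-short jungle: a set `X` of at least `k` vertices such that for every ordered
pair of distinct vertices `v, w ∈ X` there are `k` pairwise distinct paths from `v` to `w`,
each of length at most `d`, that are pairwise internally vertex-disjoint. -/
def ShortJungle {V : Type*} (E : V → V → Prop) (k d : ℕ) (X : Set V) : Prop :=
  k ≤ X.ncard ∧ ∀ v ∈ X, ∀ w ∈ X, v ≠ w →
    ∃ P : Fin k → List V, Function.Injective P ∧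
      (∀ i, PathFrom E v w (P i) ∧ pathLen (P i) ≤ d) ∧
      (∀ i j, i ≠ j → ∀ z ∈ internals (P i), z ∉ internals (P j))

/-- A `(k,d)`-short immersion jungle: as a short jungle, but with the `k` paths required
to be pairwise arc-disjoint instead of internally vertex-disjoint. -/
def ShortImmersionJungle {V : Type*} (E : V → V → Prop) (k d : ℕ) (X : Set V) : Prop :=
  k ≤ X.ncard ∧ ∀ v ∈ X, ∀ w ∈ X, v ≠ w →
    ∃ P : Fin k → List V, Function.Injective P ∧
      (∀ i, PathFrom E v w (P i) ∧ pathLen (P i) ≤ d) ∧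
      (∀ i j, i ≠ j → ∀ a ∈ arcsOf (P i), a ∉ arcsOf (P j))

/-- `H` (arc relation `Eh`) is topologically contained in `G` (arc relation `Eg`):
there is an injective map `η` on vertices and, for every arc `(u,v)` of `H`, a directed
path in `G` from `η u` to `η v`, these paths being pairwise internally vertex-disjoint
with no internal vertex in the image of `η`. -/
def TopContain {W V : Type*} (Eh : W → W → Prop) (Eg : V → V → Prop) : Prop :=
  ∃ (η : W → V) (P : W → W → List V), Function.Injective η ∧
    (∀ u v : W, Eh u v → PathFrom Eg (η u) (η v) (P u v)) ∧
    (∀ u v : W, Eh u v → ∀ z ∈ internals (P u v), z ∉ Set.range η) ∧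
    (∀ u v u' v' : W, Eh u v → Eh u' v' → (u, v) ≠ (u', v') →
      ∀ z ∈ internals (P u v), z ∉ internals (P u' v'))

/-- `H` (arc relation `Eh`) is immersed in `G` (arc relation `Eg`): there is an injective
map `η` on vertices and, for every arc `(u,v)` of `H`, a directed path in `G` from `η u`
to `η v`, these paths being pairwise arc-disjoint. -/
def Immerses {W V : Type*} (Eh : W → W → Prop) (Eg : V → V → Prop) : Prop :=
  ∃ (η : W → V) (P : W → W → List V), Function.Injective η ∧
    (∀ u v : W, Eh u v → PathFrom Eg (η u) (η v) (P u v)) ∧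
    (∀ u v u' v' : W, Eh u v → Eh u' v' → (u, v) ≠ (u', v') →
      ∀ a ∈ arcsOf (P u v), a ∉ arcsOf (P u' v'))

/-- A path decomposition of the digraph with arc relation `E`, with bags `Bs 0, …, Bs (r-1)`. -/
def IsPathDecomp {V : Type*} {r : ℕ} (E : V → V → Prop) (Bs : Fin r → Set V) : Prop :=
  (⋃ i, Bs i) = Set.univ ∧
  (∀ i j l : Fin r, i < j → j < l → Bs i ∩ Bs l ⊆ Bs j) ∧
  (∀ u v : V, E u v →
    (∃ i, u ∈ Bs i ∧ v ∈ Bs i) ∨ ∃ i j : Fin r, j < i ∧ u ∈ Bs i ∧ v ∈ Bs j)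

/-- The pathwidth of a digraph: the least `p` admitting a path decomposition all of whose
bags have size at most `p + 1`. -/
noncomputable def pathwidth {V : Type*} (E : V → V → Prop) : ℕ :=
  sInf {p | ∃ (r : ℕ) (Bs : Fin r → Set V), IsPathDecomp E Bs ∧ ∀ i, (Bs i).ncard - 1 ≤ p}

/-- A separation of a digraph: a pair `(A,B)` covering all vertices with no arc from
`A \ B` to `B \ A`. -/
def IsSeparation {V : Type*} (E : V → V → Prop) (A B : Set V) : Prop :=
  A ∪ B = Set.univ ∧ ∀ v ∈ A \ B, ∀ w ∈ B \ A, ¬ E v w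

/-- A separation chain `((A 0, B 0), …, (A r, B r))`. -/
def IsSepChain {V : Type*} {r : ℕ} (E : V → V → Prop) (A B : Fin (r + 1) → Set V) : Prop :=
  A 0 = ∅ ∧ B 0 = Set.univ ∧ A (Fin.last r) = Set.univ ∧ B (Fin.last r) = ∅ ∧
  (∀ i, IsSeparation E (A i) (B i)) ∧
  (∀ i j : Fin (r + 1), i ≤ j → A i ⊆ A j ∧ B j ⊆ B i)

/-- A `(k,ℓ)`-degree tangle: at least `k` vertices whose outdegrees pairwise differ
by at most `ℓ`. -/
def DegreeTangle {V : Type*} (E : V → V → Prop) (k ℓ : ℕ) (X : Set V) : Prop :=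
  k ≤ X.ncard ∧ ∀ v ∈ X, ∀ w ∈ X, outdeg E v ≤ outdeg E w + ℓ

/-- A `(k,ℓ)`-matching tangle: disjoint sets `X`, `Y` of size `k` with a matching from `X`
to `Y`, where every vertex of `Y` has outdegree more than `ℓ` larger than every vertex
of `X`. -/
def MatchingTangle {V : Type*} (E : V → V → Prop) (k ℓ : ℕ) (X Y : Set V) : Prop :=
  Disjoint X Y ∧ X.ncard = k ∧ Y.ncard = k ∧
  (∃ f : V → V, Set.BijOn f X Y ∧ ∀ v ∈ X, E v (f v)) ∧
  (∀ v ∈ X, ∀ w ∈ Y, outdeg E v + ℓ < outdeg E w)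

/-- A `k`-backward tangle: a partition `(X,Y)` of the vertex set with at least `k` arcs
from `X` to `Y`, and every outdegree in `Y` at least every outdegree in `X`. -/
def BackwardTangle {V : Type*} (E : V → V → Prop) (k : ℕ) (X Y : Set V) : Prop :=
  X ∪ Y = Set.univ ∧ Disjoint X Y ∧
  k ≤ {p : V × V | p.1 ∈ X ∧ p.2 ∈ Y ∧ E p.1 p.2}.ncard ∧
  (∀ v ∈ X, ∀ w ∈ Y, outdeg E v ≤ outdeg E w)

/-- The width of an ordering of the vertices (given as a bijection from `Fin n`):
the maximum, over prefixes, of the number of arcs leaving the prefix forward. -/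
noncomputable def orderWidth {V : Type*} [Fintype V] (E : V → V → Prop)
    (e : Fin (Fintype.card V) ≃ V) : ℕ :=
  ⨆ α : Fin (Fintype.card V + 1),
    {p : V × V | ((e.symm p.1 : ℕ) < (α : ℕ)) ∧ ¬ ((e.symm p.2 : ℕ) < (α : ℕ)) ∧
      E p.1 p.2}.ncard

/-- The cutwidth of a digraph: the minimum width over all orderings of the vertices. -/
noncomputable def cutwidth {V : Type*} [Fintype V] (E : V → V → Prop) : ℕ :=
  ⨅ e : Fin (Fintype.card V) ≃ V, orderWidth E e

/-- `(X,Y)` is a bipartition of the simple graph `G`. -/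
def IsBipartition {V : Type*} (G : SimpleGraph V) (X Y : Set V) : Prop :=
  X ∪ Y = Set.univ ∧ Disjoint X Y ∧
  ∀ u v : V, G.Adj u v → (u ∈ X ∧ v ∈ Y) ∨ (u ∈ Y ∧ v ∈ X)

/-- A matching of `G`: a set of edges of `G` that are pairwise vertex-disjoint. -/
def IsMatching {V : Type*} (G : SimpleGraph V) (M : Set (Sym2 V)) : Prop :=
  M ⊆ G.edgeSet ∧ ∀ e ∈ M, ∀ f ∈ M, e ≠ f → ∀ v : V, v ∈ e → v ∉ f

/-- A maximum matching of `G`. -/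
def IsMaxMatching {V : Type*} [Fintype V] (G : SimpleGraph V) (M : Set (Sym2 V)) : Prop :=
  IsMatching G M ∧ ∀ N : Set (Sym2 V), IsMatching G N → N.ncard ≤ M.ncard

/-- A vertex is covered by a matching if it is an endpoint of one of its edges. -/
def CoveredBy {V : Type*} (M : Set (Sym2 V)) (v : V) : Prop := ∃ e ∈ M, v ∈ e

/-- A vertex is covered by every maximum matching of `G`. -/
def CoveredByAllMax {V : Type*} [Fintype V] (G : SimpleGraph V) (v : V) : Prop :=
  ∀ M : Set (Sym2 V), IsMaxMatching G M → CoveredBy M v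

/-- Deletion of the vertex `w` from a simple graph (keeping the vertex type). -/
def deleteVert {V : Type*} (G : SimpleGraph V) (w : V) : SimpleGraph V where
  Adj x y := G.Adj x y ∧ x ≠ w ∧ y ≠ w
  symm := ⟨fun _ _ h => ⟨h.1.symm, h.2.2, h.2.1⟩⟩
  loopless := ⟨fun _ h => G.irrefl h.1⟩

/-- An `M`-alternating path from `u` to `v`: a (possibly trivial) path starting at `u` and
ending at `v` whose edges alternate between non-matching and matching edges, beginning
with a non-matching edge. -/
def AltPathFrom {V : Type*} (G : SimpleGraph V) (M : Set (Sym2 V)) (u v : V) : Prop :=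
  ∃ p : List V, p ≠ [] ∧ p.Nodup ∧ p.Chain' G.Adj ∧
    p.head? = some u ∧ p.getLast? = some v ∧
    ∀ i : ℕ, (h : i + 1 < p.length) →
      (s(p.get ⟨i, Nat.lt_of_succ_lt h⟩, p.get ⟨i + 1, h⟩) ∈ M ↔ i % 2 = 1)

/-!
Suppose the maximum matching `M` misses `u ∈ X` and the maximum matching `N` misses `v ∉ X`.
Let `S` be the set of vertices reachable from `u` by walks that leave vertices of `X` along
edges of `N \ M` and all other vertices along edges of `M \ N`. Since the graph is bipartite,
every vertex of `S` other than `u` is entered along its unique edge of the other kind, so `S`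
is closed under the edges of `M ∆ N`, and `v ∉ S`. Taking `M` on `S` and `N` elsewhere gives a
matching; exchanging the roles of `M` and `N` gives another, and together they have `|M| + |N|`
edges, so both are maximum. The first one misses `u` and `v`, so `uv` could be added to it.
-/

namespace IsMatching

variable {V : Type*} {G : SimpleGraph V} {M : Set (Sym2 V)}

theorem eq_of_mem_of_mem (hM : IsMatching G M) {e f : Sym2 V} (he : e ∈ M) (hf : f ∈ M)
    {w : V} (hwe : w ∈ e) (hwf : w ∈ f) : e = f := by
  by_contra hne
  exact hM.2 e he f hf hne w hwe hwf

theorem insert_of_not_coveredBy (hM : IsMatching G M) {u v : V} (huv : G.Adj u v)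
    (hu : ¬ CoveredBy M u) (hv : ¬ CoveredBy M v) : IsMatching G (insert s(u, v) M) := by
  have hfree : ∀ e ∈ M, ∀ w ∈ s(u, v), w ∉ e := by
    rintro e he w hw hwe
    rcases Sym2.mem_iff.mp hw with rfl | rfl
    exacts [hu ⟨e, he, hwe⟩, hv ⟨e, he, hwe⟩]
  refine ⟨Set.insert_subset huv hM.1, ?_⟩
  rintro e (rfl | he) f (rfl | hf) hne w hwe hwf
  · exact hne rfl
  · exact hfree f hf w hwe hwf
  · exact hfree e he w hwf hwe
  · exact hM.2 e he f hf hne w hwe hwf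

end IsMatching

theorem IsMaxMatching.coveredBy_or_coveredBy {V : Type*} [Fintype V] {G : SimpleGraph V}
    {M : Set (Sym2 V)} (hM : IsMaxMatching G M) {u v : V} (huv : G.Adj u v) :
    CoveredBy M u ∨ CoveredBy M v := by
  by_contra! h
  have hnew : s(u, v) ∉ M := fun he => h.1 ⟨_, he, Sym2.mem_mk_left u v⟩
  have hcard := hM.2 _ (hM.1.insert_of_not_coveredBy huv h.1 h.2)
  rw [Set.ncard_insert_of_notMem hnew (Set.toFinite M)] at hcard
  omega

section SwapOn

variable {V : Type*} {G : SimpleGraph V} {M N : Set (Sym2 V)} {S : Set V}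

/-- `S` is a union of vertex sets of connected components of `M ∆ N`. -/
def SymmDiffClosed (M N : Set (Sym2 V)) (S : Set V) : Prop :=
  ∀ a b, a ∈ S → s(a, b) ∈ symmDiff M N → b ∈ S

theorem SymmDiffClosed.symm (hS : SymmDiffClosed M N S) : SymmDiffClosed N M S := by
  intro a b ha hab
  exact hS a b ha (symmDiff_comm N M ▸ hab)

theorem SymmDiffClosed.mem_of_mem_edge (hS : SymmDiffClosed M N S) {e : Sym2 V}
    (he : e ∈ symmDiff M N) {a w : V} (ha : a ∈ S) (hae : a ∈ e) (hwe : w ∈ e) : w ∈ S := by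
  by_cases haw : a = w
  · exact haw ▸ ha
  rw [(Sym2.mem_and_mem_iff haw).mp ⟨hae, hwe⟩] at he
  exact hS a w ha he

def swapOn (M N : Set (Sym2 V)) (S : Set V) : Set (Sym2 V) :=
  M \ {e | ∃ w ∈ e, w ∈ S} ∪ N ∩ {e | ∃ w ∈ e, w ∈ S}

theorem IsMatching.swapOn (hM : IsMatching G M) (hN : IsMatching G N)
    (hS : SymmDiffClosed M N S) : IsMatching G (swapOn M N S) := by
  have hcross : ∀ e ∈ M \ {e | ∃ w ∈ e, w ∈ S}, ∀ f ∈ N ∩ {e | ∃ w ∈ e, w ∈ S},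
      ∀ w, w ∈ e → w ∉ f := by
    rintro e ⟨heM, heS⟩ f ⟨hfN, a, haf, ha⟩ w hwe hwf
    have hfM : f ∉ M := fun hfM => heS (hM.eq_of_mem_of_mem heM hfM hwe hwf ▸ ⟨a, haf, ha⟩)
    exact heS ⟨w, hwe, hS.mem_of_mem_edge (Or.inr ⟨hfN, hfM⟩) ha haf hwf⟩
  refine ⟨Set.union_subset (Set.sdiff_subset.trans hM.1) (Set.inter_subset_left.trans hN.1), ?_⟩
  rintro e (he | he) f (hf | hf) hne w hwe hwf
  · exact hM.2 e he.1 f hf.1 hne w hwe hwf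
  · exact hcross e he f hf w hwe hwf
  · exact hcross f hf e he w hwf hwe
  · exact hN.2 e he.1 f hf.1 hne w hwe hwf

theorem ncard_swapOn_add_ncard_swapOn (hM : M.Finite) (hN : N.Finite) :
    (swapOn M N S).ncard + (swapOn N M S).ncard = M.ncard + N.ncard := by
  set T : Set (Sym2 V) := {e | ∃ w ∈ e, w ∈ S}
  have hdisj : ∀ A B : Set (Sym2 V), Disjoint (A \ T) (B ∩ T) := fun A B =>
    Set.disjoint_sdiff_left.mono_right Set.inter_subset_right
  have hM' := Set.ncard_inter_add_ncard_sdiff_eq_ncard M T hM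
  have hN' := Set.ncard_inter_add_ncard_sdiff_eq_ncard N T hN
  rw [swapOn, swapOn, Set.ncard_union_eq (hdisj M N) hM.sdiff (hN.inter_of_left T),
    Set.ncard_union_eq (hdisj N M) hN.sdiff (hM.inter_of_left T)]
  omega

theorem IsMaxMatching.swapOn [Fintype V] (hM : IsMaxMatching G M) (hN : IsMaxMatching G N)
    (hS : SymmDiffClosed M N S) : IsMaxMatching G (swapOn M N S) := by
  have hcard := ncard_swapOn_add_ncard_swapOn (S := S) (Set.toFinite M) (Set.toFinite N)
  have hle := hN.2 _ (hN.1.swapOn hM.1 hS.symm)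
  exact ⟨hM.1.swapOn hN.1 hS, fun K hK => (hM.2 K hK).trans (by omega)⟩

theorem SymmDiffClosed.coveredBy_of_coveredBy_swapOn (hS : SymmDiffClosed M N S) {w : V}
    (hw : CoveredBy (swapOn M N S) w) : (w ∈ S → CoveredBy N w) ∧ (w ∉ S → CoveredBy M w) := by
  obtain ⟨e, ⟨heM, heS⟩ | ⟨heN, a, hae, ha⟩, hwe⟩ := hw
  · exact ⟨fun hw => absurd ⟨w, hwe, hw⟩ heS, fun _ => ⟨e, heM, hwe⟩⟩
  refine ⟨fun _ => ⟨e, heN, hwe⟩, fun hw => ?_⟩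
  by_contra heM
  exact hw (hS.mem_of_mem_edge (Or.inr ⟨heN, fun h => heM ⟨e, h, hwe⟩⟩) ha hae hwe)

end SwapOn

section AltReach

variable {V : Type*} {G : SimpleGraph V} {X : Set V} {M N : Set (Sym2 V)} {u : V}

def AltStep (X : Set V) (M N : Set (Sym2 V)) (a b : V) : Prop :=
  a ∈ X ∧ s(a, b) ∈ N \ M ∨ a ∉ X ∧ s(a, b) ∈ M \ N

def altReach (X : Set V) (M N : Set (Sym2 V)) (u : V) : Set V :=
  {w | Relation.ReflTransGen (AltStep X M N) u w}

theorem symmDiffClosed_altReach (hX : ∀ a b, G.Adj a b → (a ∈ X ↔ b ∉ X))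
    (hM : IsMatching G M) (hN : IsMatching G N) (hu : u ∈ X) (huM : ¬ CoveredBy M u) :
    SymmDiffClosed M N (altReach X M N u) := by
  intro a b ha hab
  by_cases hstep : AltStep X M N a b
  · exact Relation.ReflTransGen.tail ha hstep
  rcases ha.cases_tail with rfl | ⟨p, hp, hpa⟩
  · have habM : s(a, b) ∈ M := by
      simp only [AltStep, Set.mem_symmDiff, Set.mem_sdiff, hu] at hstep hab; tauto
    exact absurd ⟨_, habM, Sym2.mem_mk_left a b⟩ huM
  suffices b = p from this ▸ hp
  rcases hpa with ⟨hpX, hpaN, -⟩ | ⟨hpX, hpaM, -⟩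
  · have haX : a ∉ X := (hX p a (hN.1 hpaN)).mp hpX
    have habN : s(a, b) ∈ N := by
      simp only [AltStep, Set.mem_symmDiff, Set.mem_sdiff, haX] at hstep hab; tauto
    rw [Sym2.eq_swap] at hpaN
    exact Sym2.congr_right.mp
      (hN.eq_of_mem_of_mem habN hpaN (Sym2.mem_mk_left a b) (Sym2.mem_mk_left a p))
  · have haX : a ∈ X := not_not.mp fun h => hpX ((hX p a (hM.1 hpaM)).mpr h)
    have habM : s(a, b) ∈ M := by
      simp only [AltStep, Set.mem_symmDiff, Set.mem_sdiff, haX] at hstep hab; tauto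
    rw [Sym2.eq_swap] at hpaM
    exact Sym2.congr_right.mp
      (hM.eq_of_mem_of_mem habM hpaM (Sym2.mem_mk_left a b) (Sym2.mem_mk_left a p))

theorem not_mem_altReach (hX : ∀ a b, G.Adj a b → (a ∈ X ↔ b ∉ X)) (hM : M ⊆ G.edgeSet)
    (hu : u ∈ X) {v : V} (hv : v ∉ X) (hvN : ¬ CoveredBy N v) : v ∉ altReach X M N u := by
  intro hreach
  rcases hreach.cases_tail with rfl | ⟨p, -, ⟨-, hpvN, -⟩ | ⟨hpX, hpvM, -⟩⟩
  · exact hv hu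
  · exact hvN ⟨_, hpvN, Sym2.mem_mk_right p v⟩
  · exact hpX ((hX p v (hM hpvM)).mpr hv)

end AltReach

theorem IsBipartition.mem_iff_not_mem {V : Type*} {G : SimpleGraph V} {X Y : Set V}
    (hB : IsBipartition G X Y) {a b : V} (hab : G.Adj a b) : a ∈ X ↔ b ∉ X := by
  have hXY := Set.disjoint_left.mp hB.2.1
  rcases hB.2.2 a b hab with ⟨ha, hbY⟩ | ⟨haY, hbX⟩
  · exact ⟨fun _ hbX => hXY hbX hbY, fun _ => ha⟩
  · exact ⟨fun haX => absurd haY (hXY haX), fun h => absurd hbX h⟩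

theorem exists_isMaxMatching_not_coveredBy {V : Type*} [Fintype V] {G : SimpleGraph V}
    {X : Set V} (hX : ∀ a b, G.Adj a b → (a ∈ X ↔ b ∉ X)) {M N : Set (Sym2 V)}
    (hM : IsMaxMatching G M) (hN : IsMaxMatching G N) {u v : V} (hu : u ∈ X) (hv : v ∉ X)
    (huM : ¬ CoveredBy M u) (hvN : ¬ CoveredBy N v) :
    ∃ K, IsMaxMatching G K ∧ ¬ CoveredBy K u ∧ ¬ CoveredBy K v := by
  have hS := symmDiffClosed_altReach hX hM.1 hN.1 hu huM
  have hvS := not_mem_altReach hX hM.1.1 hu hv hvN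
  refine ⟨swapOn N M (altReach X M N u), hN.swapOn hM hS.symm, fun h => ?_, fun h => ?_⟩
  · exact huM ((hS.symm.coveredBy_of_coveredBy_swapOn h).1 Relation.ReflTransGen.refl)
  · exact hvN ((hS.symm.coveredBy_of_coveredBy_swapOn h).2 hvS)

/-- In a finite bipartite graph, the set of vertices covered by every
maximum matching is a vertex cover. -/
theorem stmt_14 {V : Type*} [Fintype V] (G : SimpleGraph V) (X Y : Set V)
    (hB : IsBipartition G X Y) (u v : V) (huv : G.Adj u v) :
    CoveredByAllMax G u ∨ CoveredByAllMax G v := by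
  by_contra! h
  simp only [CoveredByAllMax, not_forall] at h
  obtain ⟨⟨M, hM, huM⟩, ⟨N, hN, hvN⟩⟩ := h
  have hX : ∀ a b, G.Adj a b → (a ∈ X ↔ b ∉ X) := fun a b => hB.mem_iff_not_mem
  obtain ⟨K, hK, huK, hvK⟩ : ∃ K, IsMaxMatching G K ∧ ¬ CoveredBy K u ∧ ¬ CoveredBy K v := by
    by_cases hu : u ∈ X
    · exact exists_isMaxMatching_not_coveredBy hX hM hN hu ((hX u v huv).mp hu) huM hvN
    · obtain ⟨K, hK, hvK, huK⟩ := exists_isMaxMatching_not_coveredBy hX hN hM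
        (not_not.mp fun hv => hu ((hX u v huv).mpr hv)) hu hvN huM
      exact ⟨K, hK, huK, hvK⟩
  exact (hK.coveredBy_or_coveredBy huv).elim huK hvK
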